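/- Let ζ, η ∈ ℂ with |ζ| = |η| = 1, and let u, v : ℕ → 𝔻 be sequences with u_n → ζ and v_n → η. Then u and v (which are admissible with respect to the base point 0 and the Poincaré distance) are equivalent admissible sequences if and only if ζ = η. -/

import Mathlib

open Filter Set

noncomputable section

/-- The inverse hyperbolic tangent: `artanh r = (1/2) log ((1+r)/(1-r))`. -/
def artanh (r : ℝ) : ℝ := (1 / 2) * Real.log ((1 + r) / (1 - r))

/-- The Poincaré (Kobayashi) distance on the unit disc
`ρ(z,w) = artanh |(z - w)/(1 - conj w * z)|`. -/
def pd (z w : ℂ) : ℝ := artanh (‖(z - w) / (1 - (starRingEnd ℂ) w * z)‖)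

/-- The horosphere in the unit disc of a sequence `u` with respect to base point `x`
and radius `R`. -/
def discE (x : ℂ) (u : ℕ → ℂ) (R : ℝ) : Set ℂ :=
  {z : ℂ | ‖z‖ < 1 ∧
    Filter.limsup (fun n => pd z (u n) - pd x (u n)) Filter.atTop < (1 / 2) * Real.log R}

/-- Two sequences in the unit disc are equivalent (as admissible sequences with respect to
the base point `x`) if every horosphere of one contains a horosphere of the other. -/
def EquivAdm (x : ℂ) (u v : ℕ → ℂ) : Prop :=
  ∀ R > (0 : ℝ), (∃ R' > (0 : ℝ), discE x u R' ⊆ discE x v R) ∧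
    (∃ R'' > (0 : ℝ), discE x v R'' ⊆ discE x u R)

/-! For `u n → ζ ∈ ∂𝔻`, `ρ(z, u n) - ρ(0, u n)` converges to `½ log (‖ζ - z‖² / (1 - ‖z‖²))`, so
the horosphere `E₀(u, R)` is the horodisc `{‖ζ - z‖² < R (1 - ‖z‖²)}` and depends on `u` only
through `ζ`. A horodisc at `ζ` accumulates at `ζ`, whereas the closure of a horodisc at `η` meets
the unit circle only at `η`; hence horodiscs at different boundary points are never nested. -/

theorem norm_one_sub_conj_mul_sq_sub_norm_sub_sq (z w : ℂ) :
    ‖1 - (starRingEnd ℂ) w * z‖ ^ 2 - ‖z - w‖ ^ 2 = (1 - ‖z‖ ^ 2) * (1 - ‖w‖ ^ 2) := by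
  simp only [Complex.sq_norm, Complex.normSq_apply, Complex.sub_re, Complex.sub_im,
    Complex.mul_re, Complex.mul_im, Complex.one_re, Complex.one_im,
    Complex.conj_re, Complex.conj_im]
  ring

theorem norm_sub_lt_norm_one_sub_conj_mul {z w : ℂ} (hz : ‖z‖ < 1) (hw : ‖w‖ < 1) :
    ‖z - w‖ < ‖1 - (starRingEnd ℂ) w * z‖ := by
  have hz' : 0 < 1 - ‖z‖ ^ 2 := by nlinarith [norm_nonneg z]
  have hw' : 0 < 1 - ‖w‖ ^ 2 := by nlinarith [norm_nonneg w]
  refine lt_of_pow_lt_pow_left₀ 2 (norm_nonneg _) ?_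
  nlinarith [norm_one_sub_conj_mul_sq_sub_norm_sub_sq z w, mul_pos hz' hw']

theorem pd_zero (w : ℂ) : pd 0 w = 1 / 2 * Real.log ((1 + ‖w‖) / (1 - ‖w‖)) := by
  simp [pd, artanh]

/-- Writing `A = ‖z - w‖`, `B = ‖1 - w̄ z‖`, the identity `B² - A² = (1 - ‖z‖²)(1 - ‖w‖²)`
moves the factor `1 - ‖w‖`, which degenerates at the boundary, out of the quotient. -/
theorem pd_sub_pd_zero {z w : ℂ} (hz : ‖z‖ < 1) (hw : ‖w‖ < 1) :
    pd z w - pd 0 w = 1 / 2 * Real.log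
      ((‖1 - (starRingEnd ℂ) w * z‖ + ‖z - w‖) ^ 2 / ((1 - ‖z‖ ^ 2) * (1 + ‖w‖) ^ 2)) := by
  have key := norm_one_sub_conj_mul_sq_sub_norm_sub_sq z w
  have hAB := norm_sub_lt_norm_one_sub_conj_mul hz hw
  set A := ‖z - w‖
  set B := ‖1 - (starRingEnd ℂ) w * z‖
  have hA : 0 ≤ A := norm_nonneg _
  have hw0 : 0 ≤ ‖w‖ := norm_nonneg w
  have hz' : 1 - ‖z‖ ^ 2 ≠ 0 := by nlinarith [norm_nonneg z]
  have hpd : pd z w = 1 / 2 * Real.log ((B + A) / (B - A)) := by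
    have hB : B ≠ 0 := by linarith
    rw [show pd z w = 1 / 2 * Real.log ((1 + A / B) / (1 - A / B)) by rw [pd, artanh, norm_div],
      one_add_div hB, one_sub_div hB, div_div_div_cancel_right₀ hB]
  rw [hpd, pd_zero, ← mul_sub,
    ← Real.log_div (div_pos (by linarith) (by linarith)).ne' (div_pos (by linarith) (by linarith)).ne']
  congr 2
  rw [div_div_div_eq, div_eq_div_iff (by nlinarith) (by positivity)]
  linear_combination -(B + A) * (1 + ‖w‖) * key

theorem norm_one_sub_conj_mul_of_norm_eq_one {ζ : ℂ} (hζ : ‖ζ‖ = 1) (z : ℂ) :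
    ‖1 - (starRingEnd ℂ) ζ * z‖ = ‖ζ - z‖ := by
  have hconj : (starRingEnd ℂ) ζ * ζ = 1 := by
    rw [mul_comm, Complex.mul_conj, Complex.normSq_eq_norm_sq, hζ]; norm_num
  calc ‖1 - (starRingEnd ℂ) ζ * z‖ = ‖(starRingEnd ℂ) ζ * (ζ - z)‖ := by rw [mul_sub, hconj]
    _ = ‖ζ - z‖ := by rw [norm_mul, Complex.norm_conj, hζ, one_mul]

theorem tendsto_pd_sub_pd_zero {ζ z : ℂ} (hζ : ‖ζ‖ = 1) (hz : ‖z‖ < 1) {u : ℕ → ℂ}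
    (hu : ∀ n, ‖u n‖ < 1) (hcu : Tendsto u atTop (nhds ζ)) :
    Tendsto (fun n => pd z (u n) - pd 0 (u n)) atTop
      (nhds (1 / 2 * Real.log (‖ζ - z‖ ^ 2 / (1 - ‖z‖ ^ 2)))) := by
  have hz' : 0 < 1 - ‖z‖ ^ 2 := by nlinarith [norm_nonneg z]
  have hζz : 0 < ‖ζ - z‖ := norm_pos_iff.2 (sub_ne_zero.2 fun h => by simp [h] at hζ; linarith)
  set G : ℂ → ℝ := fun w =>
    (‖1 - (starRingEnd ℂ) w * z‖ + ‖z - w‖) ^ 2 / ((1 - ‖z‖ ^ 2) * (1 + ‖w‖) ^ 2)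
  have hGζ : G ζ = ‖ζ - z‖ ^ 2 / (1 - ‖z‖ ^ 2) := by
    simp only [G, norm_one_sub_conj_mul_of_norm_eq_one hζ, norm_sub_rev z ζ, hζ]
    field_simp
  have hG : ContinuousAt (fun w => 1 / 2 * Real.log (G w)) ζ := by
    have : (1 - ‖z‖ ^ 2) * (1 + ‖ζ‖) ^ 2 ≠ 0 := by rw [hζ]; positivity
    have : G ζ ≠ 0 := by rw [hGζ]; positivity
    fun_prop (disch := assumption)
  rw [← hGζ]
  exact (hG.tendsto.comp hcu).congr fun n => (pd_sub_pd_zero hz (hu n)).symm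

/-- The horodisc at `ζ ∈ ∂𝔻` of radius `R`: a Euclidean disc internally tangent to `∂𝔻` at `ζ`. -/
def horodisc (ζ : ℂ) (R : ℝ) : Set ℂ :=
  {z : ℂ | ‖z‖ < 1 ∧ ‖ζ - z‖ ^ 2 < R * (1 - ‖z‖ ^ 2)}

theorem discE_zero_eq_horodisc {ζ : ℂ} (hζ : ‖ζ‖ = 1) {u : ℕ → ℂ} (hu : ∀ n, ‖u n‖ < 1)
    (hcu : Tendsto u atTop (nhds ζ)) {R : ℝ} (hR : 0 < R) :
    discE 0 u R = horodisc ζ R := by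
  ext z
  refine and_congr_right fun hz => ?_
  have hz' : 0 < 1 - ‖z‖ ^ 2 := by nlinarith [norm_nonneg z]
  have hζz : 0 < ‖ζ - z‖ := norm_pos_iff.2 (sub_ne_zero.2 fun h => by simp [h] at hζ; linarith)
  rw [(tendsto_pd_sub_pd_zero hζ hz hu hcu).limsup_eq, mul_lt_mul_iff_right₀ one_half_pos,
    Real.log_lt_log_iff (by positivity) hR, div_lt_iff₀ hz']

theorem closure_horodisc_subset (ζ : ℂ) (R : ℝ) :
    closure (horodisc ζ R) ⊆ {z : ℂ | ‖ζ - z‖ ^ 2 ≤ R * (1 - ‖z‖ ^ 2)} :=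
  (closure_mono fun _ hz => hz.2).trans (closure_lt_subset_le (by fun_prop) (by fun_prop))

/-- Approach `ζ` radially: `(1 - ε) ζ` lies in the horodisc once `ε < min R 1`. -/
theorem mem_closure_horodisc {ζ : ℂ} (hζ : ‖ζ‖ = 1) {R : ℝ} (hR : 0 < R) :
    ζ ∈ closure (horodisc ζ R) := by
  have hlim : Tendsto (fun ε : ℝ => ((1 - ε : ℝ) : ℂ) * ζ) (nhdsWithin 0 (Ioi 0)) (nhds ζ) := by
    have : Continuous (fun ε : ℝ => ((1 - ε : ℝ) : ℂ) * ζ) := by fun_prop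
    simpa using (this.tendsto 0).mono_left nhdsWithin_le_nhds
  refine mem_closure_of_tendsto hlim ?_
  filter_upwards [Ioo_mem_nhdsGT (lt_min hR one_pos)] with ε ⟨hε0, hε⟩
  have hεR : ε < R := hε.trans_le (min_le_left _ _)
  have hε1 : ε < 1 := hε.trans_le (min_le_right _ _)
  have hnorm : ‖((1 - ε : ℝ) : ℂ) * ζ‖ = 1 - ε := by
    rw [norm_mul, hζ, mul_one, Complex.norm_real, Real.norm_of_nonneg (by linarith)]
  have hdist : ‖ζ - ((1 - ε : ℝ) : ℂ) * ζ‖ = ε := by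
    rw [show ζ - ((1 - ε : ℝ) : ℂ) * ζ = (ε : ℂ) * ζ by push_cast; ring, norm_mul, hζ, mul_one,
      Complex.norm_real, Real.norm_of_nonneg hε0.le]
  refine ⟨by rw [hnorm]; linarith, ?_⟩
  rw [hnorm, hdist]
  nlinarith [mul_lt_mul_of_pos_right hεR hε0, mul_pos (mul_pos hR hε0) (sub_pos.2 hε1)]

theorem eq_of_horodisc_subset {ζ η : ℂ} (hζ : ‖ζ‖ = 1) {R' R : ℝ} (hR' : 0 < R')
    (h : horodisc ζ R' ⊆ horodisc η R) : ζ = η := by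
  have hle : ‖η - ζ‖ ^ 2 ≤ R * (1 - ‖ζ‖ ^ 2) :=
    closure_horodisc_subset η R (closure_mono h (mem_closure_horodisc hζ hR'))
  rw [hζ] at hle
  norm_num at hle
  exact (sub_eq_zero.1 hle).symm

theorem equivAdm_iff_same_limit (ζ η : ℂ) (hζ : ‖ζ‖ = 1) (hη : ‖η‖ = 1)
    (u v : ℕ → ℂ) (hu : ∀ n, ‖u n‖ < 1) (hv : ∀ n, ‖v n‖ < 1)
    (hcu : Filter.Tendsto u Filter.atTop (nhds ζ))
    (hcv : Filter.Tendsto v Filter.atTop (nhds η)) :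
    EquivAdm 0 u v ↔ ζ = η := by
  constructor
  · intro h
    obtain ⟨⟨R', hR', hsub⟩, -⟩ := h 1 one_pos
    rw [discE_zero_eq_horodisc hζ hu hcu hR', discE_zero_eq_horodisc hη hv hcv one_pos] at hsub
    exact eq_of_horodisc_subset hζ hR' hsub
  · rintro rfl R hR
    have hE : discE 0 u R = discE 0 v R := by
      rw [discE_zero_eq_horodisc hζ hu hcu hR, discE_zero_eq_horodisc hη hv hcv hR]
    exact ⟨⟨R, hR, hE.subset⟩, ⟨R, hR, hE.symm.subset⟩⟩
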